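/- arXiv:1705.01327 — 3 statements merged into one kernel-verified Lean document; each statement's English description precedes it below -/
import Mathlib

section
/- Let n be a positive integer and p_1, ..., p_n be positive real numbers. Then the integral of the function x_1^{p_1-1} x_2^{p_2-1} \cdots x_n^{p_n-1} over the set B^+ = {(x_1,...,x_n) \in \mathbb{R}^n : x_1^2 + ... + x_n^2 \le 1, x_k > 0 for all k} with respect to Lebesgue measure equals (1/2^n) \cdot \Gamma(p_1/2)\cdots\Gamma(p_n/2) / \Gamma(1 + (p_1 + ... + p_n)/2). -/
/-!
Integrate `x₁^(p₁-1) ⋯ xₙ^(pₙ-1) e^(-|x|²)` over the open positive orthant in two ways.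
Coordinatewise (Fubini) it is `∏ Γ(pᵢ/2)/2`. Writing instead `e^(-|x|²) = ∫_{t ≥ |x|²} e^(-t) dt`
and swapping the integrals (Tonelli), the inner integral is taken over the orthant ball of squared
radius `t`; since the integrand is homogeneous of degree `s - n` with `s = ∑ pᵢ`, it equals
`t^(s/2)` times the integral `I` over `B⁺`. The outer integral is then `Γ(1 + s/2) · I`.
-/

open MeasureTheory Real

open Set Module
open scoped ENNReal

theorem integral_rpow_mul_exp_neg_sq {q : ℝ} (hq : 0 < q) :
    ∫ t in Ioi (0 : ℝ), t ^ (q - 1) * exp (-t ^ 2) = Gamma (q / 2) / 2 := by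
  have h := integral_rpow_mul_exp_neg_rpow two_pos (show -1 < q - 1 by linarith)
  simp only [sub_add_cancel, rpow_two] at h
  rw [h]
  ring

theorem integrableOn_rpow_mul_exp_neg_sq {q : ℝ} (hq : 0 < q) :
    IntegrableOn (fun t : ℝ ↦ t ^ (q - 1) * exp (-t ^ 2)) (Ioi 0) := by
  simpa using integrableOn_rpow_mul_exp_neg_mul_sq one_pos (show -1 < q - 1 by linarith)

theorem ofReal_Gamma_eq_lintegral {s : ℝ} (hs : 0 < s) :
    ENNReal.ofReal (Gamma s) = ∫⁻ t in Ioi 0, ENNReal.ofReal (exp (-t) * t ^ (s - 1)) := by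
  rw [Gamma_eq_integral hs, ofReal_integral_eq_lintegral_ofReal (GammaIntegral_convergent hs)]
  filter_upwards [self_mem_ae_restrict measurableSet_Ioi] with t (ht : 0 < t)
  positivity

theorem ofReal_exp_neg_eq_lintegral (c : ℝ) :
    ENNReal.ofReal (exp (-c)) = ∫⁻ t in Ici c, ENNReal.ofReal (exp (-t)) := by
  rw [← Measure.restrict_congr_set Ioi_ae_eq_Ici, ← integral_exp_neg_Ioi,
    ofReal_integral_eq_lintegral_ofReal (integrableOn_exp_neg_Ioi c)]
  exact Filter.Eventually.of_forall fun t ↦ (exp_pos _).le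

theorem lintegral_mul_exp_neg_eq_lintegral_setLIntegral {X : Type*} [MeasurableSpace X]
    (μ : Measure X) [SFinite μ] {f : X → ℝ≥0∞} (hf : Measurable f) {q : X → ℝ}
    (hq : Measurable q) :
    ∫⁻ x, f x * ENNReal.ofReal (exp (-q x)) ∂μ =
      ∫⁻ t, (∫⁻ x in {x | q x ≤ t}, f x ∂μ) * ENNReal.ofReal (exp (-t)) := by
  set e : ℝ → ℝ≥0∞ := fun t ↦ ENNReal.ofReal (exp (-t))
  have he : Measurable e := by fun_prop
  have hsub : MeasurableSet {z : X × ℝ | q z.1 ≤ z.2} :=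
    measurableSet_le (hq.comp measurable_fst) measurable_snd
  calc ∫⁻ x, f x * e (q x) ∂μ
      = ∫⁻ x, (∫⁻ t, {x | q x ≤ t}.indicator f x * e t) ∂μ := by
        refine lintegral_congr fun x ↦ ?_
        have hind : ∀ t,
            {x | q x ≤ t}.indicator f x * e t = (Ici (q x)).indicator (f x * e ·) t :=
          fun t ↦ by by_cases h : q x ≤ t <;> simp [h]
        simp_rw [hind, lintegral_indicator measurableSet_Ici, lintegral_const_mul _ he, e,
          ← ofReal_exp_neg_eq_lintegral]
    _ = ∫⁻ t, (∫⁻ x, {x | q x ≤ t}.indicator f x * e t ∂μ) :=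
        lintegral_lintegral_swap ((hf.comp measurable_fst).indicator hsub |>.mul
          (he.comp measurable_snd)).aemeasurable
    _ = _ := by
        refine lintegral_congr fun t ↦ ?_
        rw [lintegral_mul_const _ (hf.indicator (measurableSet_le hq measurable_const)),
          lintegral_indicator (measurableSet_le hq measurable_const)]

theorem lintegral_comp_smul_of_pos {E : Type*} [NormedAddCommGroup E] [NormedSpace ℝ E]
    [MeasurableSpace E] [BorelSpace E] [FiniteDimensional ℝ E] (μ : Measure E)
    [μ.IsAddHaarMeasure] (f : E → ℝ≥0∞) {r : ℝ} (hr : 0 < r) :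
    ∫⁻ x, f (r • x) ∂μ = ENNReal.ofReal (r ^ finrank ℝ E)⁻¹ * ∫⁻ x, f x ∂μ := by
  let e : E ≃ᵐ E := (Homeomorph.smulOfNeZero r hr.ne').toMeasurableEquiv
  calc ∫⁻ x, f (r • x) ∂μ = ∫⁻ x, f x ∂(μ.map e) := (lintegral_map_equiv f e).symm
    _ = _ := by
      rw [show ⇑e = (r • ·) from rfl, Measure.map_addHaar_smul μ hr.ne', lintegral_smul_measure,
        abs_of_pos (by positivity), smul_eq_mul]

section

variable {ι : Type*} [Fintype ι]

variable (ι) in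
/-- `t` is the squared radius. -/
def orthantBall (t : ℝ) : Set (ι → ℝ) := {x | ∑ i, x i ^ 2 ≤ t ∧ ∀ i, 0 < x i}

noncomputable def orthantMonomial (p : ι → ℝ) (x : ι → ℝ) : ℝ≥0∞ :=
  ∏ i, ENNReal.ofReal (x i ^ (p i - 1))

theorem measurableSet_orthantBall (t : ℝ) : MeasurableSet (orthantBall ι t) := by
  unfold orthantBall
  measurability

theorem measurable_orthantMonomial (p : ι → ℝ) : Measurable (orthantMonomial p) := by
  unfold orthantMonomial
  fun_prop

theorem orthantBall_eq_empty {t : ℝ} (ht : t < 0) : orthantBall ι t = ∅ :=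
  eq_empty_of_forall_notMem fun x hx ↦
    (ht.trans_le (Finset.sum_nonneg fun i _ ↦ sq_nonneg (x i))).not_ge hx.1

theorem smul_mem_orthantBall_iff {r : ℝ} (hr : 0 < r) {y : ι → ℝ} :
    r • y ∈ orthantBall ι (r ^ 2) ↔ y ∈ orthantBall ι 1 := by
  simp only [orthantBall, mem_ofPred_eq, Pi.smul_apply, smul_eq_mul, mul_pow, ← Finset.mul_sum,
    mul_le_iff_le_one_right (pow_pos hr 2), mul_pos_iff_of_pos_left hr]

theorem orthantMonomial_smul (p : ι → ℝ) {r : ℝ} (hr : 0 < r) {y : ι → ℝ} (hy : ∀ i, 0 ≤ y i) :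
    orthantMonomial p (r • y) =
      ENNReal.ofReal (r ^ (∑ i, p i - Fintype.card ι)) * orthantMonomial p y := by
  have hpow : r ^ (∑ i, p i - Fintype.card ι) = ∏ i, r ^ (p i - 1) := by
    rw [← rpow_sum_of_pos hr, Finset.sum_sub_distrib, Finset.sum_const, Finset.card_univ,
      nsmul_one]
  rw [hpow, ENNReal.ofReal_prod_of_nonneg fun i _ ↦ (rpow_pos_of_pos hr _).le, orthantMonomial,
    orthantMonomial, ← Finset.prod_mul_distrib]
  refine Finset.prod_congr rfl fun i _ ↦ ?_
  rw [Pi.smul_apply, smul_eq_mul, mul_rpow hr.le (hy i),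
    ENNReal.ofReal_mul (rpow_pos_of_pos hr _).le]

theorem setLIntegral_orthantBall_sq (p : ι → ℝ) {r : ℝ} (hr : 0 < r) :
    ∫⁻ x in orthantBall ι (r ^ 2), orthantMonomial p x =
      ENNReal.ofReal (r ^ ∑ i, p i) * ∫⁻ x in orthantBall ι 1, orthantMonomial p x := by
  have hind : ∀ y, (orthantBall ι (r ^ 2)).indicator (orthantMonomial p) (r • y) =
      (orthantBall ι 1).indicator (fun y ↦ orthantMonomial p (r • y)) y := fun y ↦ by
    by_cases hy : y ∈ orthantBall ι 1
    · rw [indicator_of_mem hy, indicator_of_mem ((smul_mem_orthantBall_iff hr).2 hy)]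
    · rw [indicator_of_notMem hy, indicator_of_notMem (mt (smul_mem_orthantBall_iff hr).1 hy)]
  have hscale : ∀ y ∈ orthantBall ι 1, orthantMonomial p (r • y) =
      ENNReal.ofReal (r ^ (∑ i, p i - Fintype.card ι)) * orthantMonomial p y :=
    fun y hy ↦ orthantMonomial_smul p hr fun i ↦ (hy.2 i).le
  have hdim : finrank ℝ (ι → ℝ) = Fintype.card ι := finrank_fintype_fun_eq_card ℝ
  have hrn : 0 < r ^ Fintype.card ι := pow_pos hr _
  calc ∫⁻ x in orthantBall ι (r ^ 2), orthantMonomial p x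
      = ENNReal.ofReal (r ^ Fintype.card ι) *
          ∫⁻ y, (orthantBall ι (r ^ 2)).indicator (orthantMonomial p) (r • y) := by
        rw [lintegral_comp_smul_of_pos volume _ hr, hdim, ← mul_assoc,
          ← ENNReal.ofReal_mul hrn.le, mul_inv_cancel₀ hrn.ne', ENNReal.ofReal_one, one_mul,
          lintegral_indicator (measurableSet_orthantBall _)]
    _ = ENNReal.ofReal (r ^ Fintype.card ι) *
          (ENNReal.ofReal (r ^ (∑ i, p i - Fintype.card ι)) *
            ∫⁻ y in orthantBall ι 1, orthantMonomial p y) := by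
        simp_rw [hind, lintegral_indicator (measurableSet_orthantBall _)]
        rw [setLIntegral_congr_fun (measurableSet_orthantBall _) hscale,
          lintegral_const_mul' _ _ ENNReal.ofReal_ne_top]
    _ = _ := by
        rw [← mul_assoc, ← ENNReal.ofReal_mul hrn.le, ← rpow_natCast, ← rpow_add hr,
          add_sub_cancel]

theorem lintegral_orthantMonomial_mul_exp_neg_sum_sq_eq_prod_Gamma {p : ι → ℝ}
    (hp : ∀ i, 0 < p i) :
    ∫⁻ x in univ.pi fun _ ↦ Ioi 0, orthantMonomial p x * ENNReal.ofReal (exp (-∑ i, x i ^ 2)) =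
      ENNReal.ofReal (∏ i, Gamma (p i / 2) / 2) := by
  set g : ι → ℝ → ℝ := fun i t ↦ t ^ (p i - 1) * exp (-t ^ 2)
  have hrestrict : volume.restrict (univ.pi fun _ : ι ↦ Ioi (0 : ℝ)) =
      Measure.pi fun _ ↦ volume.restrict (Ioi 0) := by
    rw [volume_pi, Measure.restrict_pi_pi]
  have hint : IntegrableOn (fun x : ι → ℝ ↦ ∏ i, g i (x i)) (univ.pi fun _ ↦ Ioi 0) := by
    rw [IntegrableOn, hrestrict]
    exact Integrable.fintype_prod fun i ↦ integrableOn_rpow_mul_exp_neg_sq (hp i)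
  have hval : ∫ x in univ.pi fun _ ↦ Ioi 0, ∏ i, g i (x i) = ∏ i, Gamma (p i / 2) / 2 := by
    rw [hrestrict, integral_fintype_prod_eq_prod]
    exact Finset.prod_congr rfl fun i _ ↦ integral_rpow_mul_exp_neg_sq (hp i)
  have hpos : ∀ x ∈ univ.pi fun _ : ι ↦ Ioi (0 : ℝ), ∀ i, 0 < x i := fun x hx i ↦ hx i trivial
  rw [← hval, ofReal_integral_eq_lintegral_ofReal hint]
  · refine setLIntegral_congr_fun (MeasurableSet.univ_pi fun _ ↦ measurableSet_Ioi)
      fun x hx ↦ ?_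
    rw [ENNReal.ofReal_prod_of_nonneg fun i _ ↦ by have := hpos x hx i; positivity,
      orthantMonomial, ← Finset.sum_neg_distrib, exp_sum,
      ENNReal.ofReal_prod_of_nonneg fun i _ ↦ (exp_pos _).le, ← Finset.prod_mul_distrib]
    refine Finset.prod_congr rfl fun i _ ↦ ?_
    exact (ENNReal.ofReal_mul (rpow_pos_of_pos (hpos x hx i) _).le).symm
  · filter_upwards [self_mem_ae_restrict (MeasurableSet.univ_pi fun _ ↦ measurableSet_Ioi)]
      with x hx
    exact Finset.prod_nonneg fun i _ ↦ by have := hpos x hx i; positivity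

theorem lintegral_orthantMonomial_mul_exp_neg_sum_sq_eq_Gamma_mul (p : ι → ℝ)
    (hs : 0 < 1 + (∑ i, p i) / 2) :
    ∫⁻ x in univ.pi fun _ ↦ Ioi 0, orthantMonomial p x * ENNReal.ofReal (exp (-∑ i, x i ^ 2)) =
      ENNReal.ofReal (Gamma (1 + (∑ i, p i) / 2)) *
        ∫⁻ x in orthantBall ι 1, orthantMonomial p x := by
  set s := ∑ i, p i
  set I := ∫⁻ x in orthantBall ι 1, orthantMonomial p x
  have hsq : Measurable fun x : ι → ℝ ↦ ∑ i, x i ^ 2 := by fun_prop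
  have hball : ∀ t, {x : ι → ℝ | ∑ i, x i ^ 2 ≤ t} ∩ univ.pi (fun _ ↦ Ioi 0) = orthantBall ι t :=
    fun t ↦ by ext x; simp [orthantBall]
  have hslice : ∀ t : ℝ, t ≠ 0 →
      (∫⁻ x in orthantBall ι t, orthantMonomial p x) * ENNReal.ofReal (exp (-t)) =
        (Ioi 0).indicator (fun t ↦ ENNReal.ofReal (exp (-t) * t ^ (1 + s / 2 - 1)) * I) t := by
    intro t ht
    rcases ht.lt_or_gt with ht | ht
    · rw [orthantBall_eq_empty ht, Measure.restrict_empty, lintegral_zero_measure, zero_mul,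
        indicator_of_notMem (show t ∉ Ioi 0 from ht.not_gt)]
    · have hroot : t ^ (1 + s / 2 - 1) = √t ^ s := by
        rw [sqrt_eq_rpow, ← rpow_mul ht.le]
        ring_nf
      rw [indicator_of_mem (show t ∈ Ioi 0 from ht), ← sq_sqrt ht.le,
        setLIntegral_orthantBall_sq p (sqrt_pos.2 ht), sq_sqrt ht.le, hroot,
        ENNReal.ofReal_mul (exp_pos _).le]
      ring
  rw [lintegral_mul_exp_neg_eq_lintegral_setLIntegral _ (measurable_orthantMonomial p) hsq]
  calc ∫⁻ t, (∫⁻ x in {x | ∑ i, x i ^ 2 ≤ t}, orthantMonomial p x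
          ∂volume.restrict (univ.pi fun _ ↦ Ioi 0)) * ENNReal.ofReal (exp (-t))
      = ∫⁻ t, (Ioi 0).indicator
          (fun t ↦ ENNReal.ofReal (exp (-t) * t ^ (1 + s / 2 - 1)) * I) t := by
        refine lintegral_congr_ae ?_
        filter_upwards [(countable_singleton (0 : ℝ)).ae_notMem volume] with t ht
        rw [Measure.restrict_restrict (measurableSet_le hsq measurable_const), hball,
          hslice t ht]
    _ = ENNReal.ofReal (Gamma (1 + s / 2)) * I := by
        rw [lintegral_indicator measurableSet_Ioi, lintegral_mul_const _ (by fun_prop),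
          ofReal_Gamma_eq_lintegral hs, mul_comm]

theorem setIntegral_orthantBall_eq_toReal (p : ι → ℝ) (t : ℝ) :
    ∫ x in orthantBall ι t, ∏ i, x i ^ (p i - 1) =
      (∫⁻ x in orthantBall ι t, orthantMonomial p x).toReal := by
  have hnonneg : ∀ x ∈ orthantBall ι t, 0 ≤ ∏ i, x i ^ (p i - 1) :=
    fun x hx ↦ Finset.prod_nonneg fun i _ ↦ (rpow_pos_of_pos (hx.2 i) _).le
  rw [integral_eq_lintegral_of_nonneg_ae
    ((ae_restrict_iff' (measurableSet_orthantBall t)).2 (.of_forall hnonneg))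
    (by measurability : Measurable _).aestronglyMeasurable]
  congr 1
  refine setLIntegral_congr_fun (measurableSet_orthantBall t) fun x hx ↦ ?_
  exact ENNReal.ofReal_prod_of_nonneg fun i _ ↦ (rpow_pos_of_pos (hx.2 i) _).le

end

theorem stmt_0_general (n : ℕ) (p : Fin n → ℝ) (hp : ∀ i, 0 < p i) :
    ∫ x in {x : Fin n → ℝ | ∑ i, (x i) ^ 2 ≤ 1 ∧ ∀ i, 0 < x i},
        ∏ i, (x i) ^ (p i - 1) =
      (1 / 2 ^ n) * (∏ i, Gamma (p i / 2)) / Gamma (1 + (∑ i, p i) / 2) := by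
  have hs : 0 < 1 + (∑ i, p i) / 2 := by
    linarith [Finset.sum_nonneg fun i (_ : i ∈ Finset.univ) ↦ (hp i).le]
  have hΓ : 0 < Gamma (1 + (∑ i, p i) / 2) := Gamma_pos_of_pos hs
  have hI : ∫⁻ x in orthantBall (Fin n) 1, orthantMonomial p x =
      ENNReal.ofReal ((∏ i, Gamma (p i / 2) / 2) / Gamma (1 + (∑ i, p i) / 2)) := by
    rw [ENNReal.ofReal_div_of_pos hΓ,
      ← lintegral_orthantMonomial_mul_exp_neg_sum_sq_eq_prod_Gamma hp,
      lintegral_orthantMonomial_mul_exp_neg_sum_sq_eq_Gamma_mul p hs, mul_comm,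
      ENNReal.mul_div_cancel_right (ENNReal.ofReal_pos.2 hΓ).ne' ENNReal.ofReal_ne_top]
  have hprod : 0 ≤ ∏ i, Gamma (p i / 2) / 2 :=
    Finset.prod_nonneg fun i _ ↦ (div_pos (Gamma_pos_of_pos (half_pos (hp i))) two_pos).le
  rw [← orthantBall, setIntegral_orthantBall_eq_toReal, hI,
    ENNReal.toReal_ofReal (div_nonneg hprod hΓ.le), Finset.prod_div_distrib, Finset.prod_const,
    Finset.card_univ, Fintype.card_fin]
  ring

/-- Generalized Dirichlet formula: the integral of `x₁^(p₁-1) ⋯ xₙ^(pₙ-1)` over the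
intersection `B⁺` of the closed Euclidean unit ball with the open positive orthant equals
`(1/2ⁿ) · Γ(p₁/2)⋯Γ(pₙ/2) / Γ(1 + (p₁+⋯+pₙ)/2)`. -/
theorem stmt_0 (n : ℕ) (hn : 0 < n) (p : Fin n → ℝ) (hp : ∀ i, 0 < p i) :
    ∫ x in {x : Fin n → ℝ | ∑ i, (x i) ^ 2 ≤ 1 ∧ ∀ i, 0 < x i},
        ∏ i, (x i) ^ (p i - 1) =
      (1 / 2 ^ n) * (∏ i, Gamma (p i / 2)) / Gamma (1 + (∑ i, p i) / 2) :=
  stmt_0_general n p hp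
end

section
/- Let p \ge 2 be an even integer and R > 0. For each integer n \ge 2 and each real x with |x| \le n^{1/p}R, let \rho_n(x) = [p \Gamma(1 + n/p) / (2 \Gamma(1/p) \Gamma(1 + (n-1)/p))] \cdot (nR^p - x^p)^{(n-1)/p} / (nR^p)^{n/p} be the marginal density of the first coordinate of the uniform distribution on the ball M_n = {x \in \mathbb{R}^n : \sum x_k^p \le nR^p}. Then for every fixed real x, \rho_n(x) converges as n \to \infty to \rho(x) = (1 / (2 R \Gamma(1/p) p^{1/p - 1})) e^{-x^p/(pR^p)}. -/
/-!
Put `y = 1 + (n - 1)/p`. Since `1 + n/p = y + 1/p` and `nRᵖ - xᵖ = nRᵖ (1 - xᵖ/(nRᵖ))`,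
`ρₙ(x) = p/(2Γ(1/p)) · Γ(y + 1/p)/(Γ(y) y^(1/p))
  · (y/(nRᵖ))^(1/p) · (1 - xᵖ/(nRᵖ))^((n-1)/p)`.
By log-convexity of `Γ` the second factor is squeezed between `(y/(y + 1/p))^(1 - 1/p)` and `1`
(Wendel), so it tends to `1`; the third tends to `(pRᵖ)^(-1/p)` and the last to
`exp(-xᵖ/(pRᵖ))`.
-/

open Real Filter Topology

namespace Real

theorem Gamma_add_le_Gamma_mul_rpow {y s : ℝ} (hy : 0 < y) (hs0 : 0 < s) (hs1 : s < 1) :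
    Gamma (y + s) ≤ Gamma y * y ^ s := by
  have hconv := Gamma_mul_add_mul_le_rpow_Gamma_mul_rpow_Gamma (t := y + 1) hy (by linarith)
    (sub_pos.2 hs1) hs0 (sub_add_cancel 1 s)
  rw [show (1 - s) * y + s * (y + 1) = y + s by ring, Gamma_add_one hy.ne',
    mul_rpow hy.le (Gamma_pos_of_pos hy).le] at hconv
  calc Gamma (y + s) ≤ Gamma y ^ (1 - s) * (y ^ s * Gamma y ^ s) := hconv
    _ = Gamma y ^ (1 - s + s) * y ^ s := by rw [rpow_add (Gamma_pos_of_pos hy)]; ring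
    _ = Gamma y * y ^ s := by rw [sub_add_cancel, rpow_one]

theorem mul_Gamma_le_Gamma_add_mul_rpow {y s : ℝ} (hy : 0 < y) (hs0 : 0 < s) (hs1 : s < 1) :
    y * Gamma y ≤ Gamma (y + s) * (y + s) ^ (1 - s) := by
  have hys : 0 < y + s := by linarith
  have hG := Gamma_pos_of_pos hys
  have hconv := Gamma_mul_add_mul_le_rpow_Gamma_mul_rpow_Gamma (t := y + s + 1) hys (by linarith)
    hs0 (sub_pos.2 hs1) (add_sub_cancel s 1)
  rw [show s * (y + s) + (1 - s) * (y + s + 1) = y + 1 by ring, Gamma_add_one hy.ne',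
    Gamma_add_one hys.ne', mul_rpow hys.le hG.le] at hconv
  calc y * Gamma y ≤ Gamma (y + s) ^ s * ((y + s) ^ (1 - s) * Gamma (y + s) ^ (1 - s)) := hconv
    _ = Gamma (y + s) ^ (s + (1 - s)) * (y + s) ^ (1 - s) := by rw [rpow_add hG]; ring
    _ = Gamma (y + s) * (y + s) ^ (1 - s) := by rw [add_sub_cancel, rpow_one]

theorem tendsto_Gamma_add_div_Gamma_mul_rpow {s : ℝ} (hs0 : 0 < s) (hs1 : s < 1) :
    Tendsto (fun y : ℝ => Gamma (y + s) / (Gamma y * y ^ s)) atTop (𝓝 1) := by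
  have hlower : Tendsto (fun y : ℝ => (1 + s * y⁻¹) ^ (s - 1)) atTop (𝓝 1) := by
    simpa using ((tendsto_inv_atTop_zero.const_mul s).const_add 1).rpow_const
      (p := s - 1) (Or.inl (by simp))
  refine tendsto_of_tendsto_of_tendsto_of_le_of_le' hlower tendsto_const_nhds ?_ ?_
  all_goals filter_upwards [eventually_gt_atTop 0] with y hy
  · have hys : 0 < y + s := by linarith
    have h1 : 1 + s * y⁻¹ = (y + s) / y := by field_simp
    rw [h1, le_div_iff₀ (by positivity), div_rpow hys.le hy.le, rpow_sub_one hys.ne',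
      rpow_sub_one hy.ne']
    calc (y + s) ^ s / (y + s) / (y ^ s / y) * (Gamma y * y ^ s)
        = (y + s) ^ s / (y + s) * (y * Gamma y) := by field_simp
      _ ≤ (y + s) ^ s / (y + s) * (Gamma (y + s) * (y + s) ^ (1 - s)) := by
        have := mul_Gamma_le_Gamma_add_mul_rpow hy hs0 hs1
        gcongr
      _ = Gamma (y + s) := by rw [rpow_sub hys, rpow_one]; field_simp
  · exact div_le_one_of_le₀ (Gamma_add_le_Gamma_mul_rpow hy hs0 hs1) (by positivity)

theorem tendsto_one_add_div_rpow_sub_div_exp (t a c : ℝ) :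
    Tendsto (fun u : ℝ => (1 + t / u) ^ ((u - a) / c)) atTop (𝓝 (exp (t / c))) := by
  have hbase : Tendsto (fun u : ℝ => 1 + t / u) atTop (𝓝 1) := by
    simpa using tendsto_const_nhds.add (tendsto_const_nhds.div_atTop (tendsto_id (α := ℝ)))
  have hlim := ((tendsto_one_add_div_rpow_exp t).rpow_const (p := c⁻¹)
    (Or.inl (exp_pos t).ne')).mul (hbase.rpow_const (p := -(a / c)) (Or.inl one_ne_zero))
  rw [← exp_mul, one_rpow, mul_one, ← div_eq_mul_inv] at hlim
  refine hlim.congr' ?_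
  filter_upwards [hbase.eventually_const_lt (zero_lt_one' ℝ)] with u hu
  rw [← rpow_mul hu.le, ← rpow_add hu, sub_div, sub_eq_add_neg, div_eq_mul_inv u]

end Real

/-- The density `ρᵤ(x)` of the statement with `K = Rᵖ`, `z = xᵖ` and a real dimension `u`. -/
noncomputable def ballMarginalDensity (p K z u : ℝ) : ℝ :=
  p * Gamma (1 + u / p) / (2 * Gamma (1 / p) * Gamma (1 + (u - 1) / p)) *
    ((u * K - z) ^ ((u - 1) / p) / (u * K) ^ (u / p))

theorem ballMarginalDensity_eq {p K z u : ℝ} (hp : 0 < p) (hK : 0 < K) (hu : 1 ≤ u)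
    (hz : z < u * K) :
    ballMarginalDensity p K z u =
      p / (2 * Gamma (1 / p)) *
        (Gamma (1 + (u - 1) / p + 1 / p) /
          (Gamma (1 + (u - 1) / p) * (1 + (u - 1) / p) ^ (1 / p))) *
        ((1 + (u - 1) / p) / (u * K)) ^ (1 / p) * (1 + -z / K / u) ^ ((u - 1) / p) := by
  have hy : 0 < 1 + (u - 1) / p :=
    add_pos_of_pos_of_nonneg one_pos (div_nonneg (sub_nonneg.2 hu) hp.le)
  have huK : 0 < u * K := by positivity
  have hfactor : u * K - z = u * K * (1 + -z / K / u) := by field_simp; ring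
  have hfactor_pos : 0 < 1 + -z / K / u := by
    have := sub_pos.2 hz
    rw [hfactor] at this
    exact pos_of_mul_pos_right this huK.le
  rw [ballMarginalDensity, show 1 + u / p = 1 + (u - 1) / p + 1 / p by ring, hfactor,
    mul_rpow huK.le hfactor_pos.le, show u / p = (u - 1) / p + 1 / p by ring, rpow_add huK,
    div_rpow hy.le huK.le]
  generalize 1 + (u - 1) / p = y at hy ⊢
  have := Gamma_pos_of_pos hy
  have := Gamma_pos_of_pos (one_div_pos.2 hp)
  have := rpow_pos_of_pos hy (1 / p)
  field_simp

theorem tendsto_ballMarginalDensity_atTop {p K : ℝ} (hp : 1 < p) (hK : 0 < K) (z : ℝ) :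
    Tendsto (ballMarginalDensity p K z) atTop
      (𝓝 (p / (2 * Gamma (1 / p)) * (p * K)⁻¹ ^ (1 / p) * exp (-z / (p * K)))) := by
  have hp0 : 0 < p := by linarith
  have hy : Tendsto (fun u : ℝ => 1 + (u - 1) / p) atTop atTop :=
    tendsto_atTop_add_const_left _ _ <|
      (tendsto_atTop_add_const_right _ (-1) tendsto_id).atTop_div_const hp0
  have hGamma := (tendsto_Gamma_add_div_Gamma_mul_rpow (one_div_pos.2 hp0)
    ((div_lt_one hp0).2 hp)).comp hy
  have hratio : Tendsto (fun u : ℝ => (1 + (u - 1) / p) / (u * K)) atTop (𝓝 (p * K)⁻¹) := by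
    have := (tendsto_inv_atTop_zero.const_mul ((p - 1) / (p * K))).add_const (p * K)⁻¹
    rw [mul_zero, zero_add] at this
    refine this.congr' ?_
    filter_upwards [eventually_ne_atTop 0] with u hu
    field_simp
    ring
  have hlim := ((hGamma.const_mul (p / (2 * Gamma (1 / p)))).mul
    (hratio.rpow_const (p := 1 / p) (Or.inl (by positivity)))).mul
    (tendsto_one_add_div_rpow_sub_div_exp (-z / K) 1 p)
  rw [mul_one, div_div, mul_comm K p] at hlim
  refine hlim.congr' ?_
  filter_upwards [eventually_ge_atTop 1, eventually_gt_atTop (z / K)] with u hu hzu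
  exact (ballMarginalDensity_eq hp0 hK hu ((div_lt_iff₀ hK).1 hzu)).symm

theorem stmt_3_general (p : ℕ) (hp2 : 2 ≤ p) (R : ℝ) (hR : 0 < R) (x : ℝ) :
    Tendsto
      (fun n : ℕ =>
        ((p : ℝ) * Gamma (1 + (n : ℝ) / p) /
            (2 * Gamma (1 / (p : ℝ)) * Gamma (1 + ((n : ℝ) - 1) / p))) *
          (((n : ℝ) * R ^ p - x ^ p) ^ (((n : ℝ) - 1) / p) /
            ((n : ℝ) * R ^ p) ^ ((n : ℝ) / p)))
      atTop
      (nhds (1 / (2 * R * Gamma (1 / (p : ℝ)) * (p : ℝ) ^ ((1 : ℝ) / p - 1)) *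
        Real.exp (-(x ^ p) / (p * R ^ p)))) := by
  have hp : (1 : ℝ) < p := by exact_mod_cast hp2
  have hp0 : (0 : ℝ) < p := by linarith
  have hlimit : (p : ℝ) / (2 * Gamma (1 / p)) * ((p : ℝ) * R ^ p)⁻¹ ^ (1 / (p : ℝ)) =
      1 / (2 * R * Gamma (1 / (p : ℝ)) * (p : ℝ) ^ ((1 : ℝ) / p - 1)) := by
    rw [inv_rpow (by positivity), mul_rpow hp0.le (by positivity), one_div (p : ℝ),
      pow_rpow_inv_natCast hR.le (by positivity), rpow_sub_one hp0.ne']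
    have := Gamma_pos_of_pos (inv_pos.2 hp0)
    have := rpow_pos_of_pos hp0 (p : ℝ)⁻¹
    field_simp
  have h := (tendsto_ballMarginalDensity_atTop hp (pow_pos hR p) (x ^ p)).comp
    tendsto_natCast_atTop_atTop
  rwa [hlimit] at h

/-- For fixed `x`, the marginal density `ρₙ(x)` of the first coordinate of the uniform
distribution on the `ℓᵖ` ball `Mₙ = {x ∈ ℝⁿ : ∑ xₖᵖ ≤ nRᵖ}` (`p` even) converges, as
`n → ∞`, to `ρ(x) = e^(-xᵖ/(pRᵖ)) / (2 R Γ(1/p) p^(1/p - 1))`. -/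
theorem stmt_3 (p : ℕ) (hp : Even p) (hp2 : 2 ≤ p) (R : ℝ) (hR : 0 < R) (x : ℝ) :
    Tendsto
      (fun n : ℕ =>
        ((p : ℝ) * Gamma (1 + (n : ℝ) / p) /
            (2 * Gamma (1 / (p : ℝ)) * Gamma (1 + ((n : ℝ) - 1) / p))) *
          (((n : ℝ) * R ^ p - x ^ p) ^ (((n : ℝ) - 1) / p) /
            ((n : ℝ) * R ^ p) ^ ((n : ℝ) / p)))
      atTop
      (nhds (1 / (2 * R * Gamma (1 / (p : ℝ)) * (p : ℝ) ^ ((1 : ℝ) / p - 1)) *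
        Real.exp (-(x ^ p) / (p * R ^ p)))) :=
  stmt_3_general p hp2 R hR x
end

section
/- Let p \ge 1 be a real number, R > 0, and n \ge 2 an integer. Define M_n^+ = {(x_1,...,x_n) \in \mathbb{R}^n : x_k \ge 0 for all k, x_1^p + ... + x_n^p \le nR^p}. Then for every real x with 0 \le x \le n^{1/p} R, the marginal density of the first coordinate under the uniform probability measure on M_n^+, namely \rho_n(x) = Vol_{n-1}({(x_2,...,x_n) : x_k \ge 0, x_2^p + ... + x_n^p \le nR^p - x^p}) / Vol_n(M_n^+), equals [p \Gamma(1 + n/p) / (\Gamma(1/p) \Gamma(1 + (n-1)/p))] \cdot (nR^p - x^p)^{(n-1)/p} / (nR^p)^{n/p}. -/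
open MeasureTheory Real Set
open scoped ENNReal NNReal

/-! Coordinatewise absolute value pushes Lebesgue measure on `ℝⁿ` forward to `2ⁿ` times
Lebesgue measure on the nonnegative orthant, so the orthant part of the `ℓᵖ` ball of radius `r`
has volume `2⁻ⁿ` times that of the ball, namely `rⁿ Γ(1/p + 1)ⁿ / Γ(n/p + 1)`. The marginal
density is the quotient of two such volumes, in dimensions `n - 1` and `n`, and
`Γ(1/p + 1) = Γ(1/p) / p` turns it into the stated constant. -/

theorem Real.map_volume_abs :
    (volume : Measure ℝ).map abs = (2 : ℝ≥0) • volume.restrict (Ici 0) := by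
  ext s hs
  rw [Measure.map_apply measurable_abs hs, Measure.smul_apply, Measure.restrict_apply hs,
    ENNReal.smul_def, smul_eq_mul, ENNReal.coe_ofNat, two_mul]
  have hsplit : abs ⁻¹' s = (s ∩ Ici 0) ∪ (-s ∩ Iio 0) := by
    ext x
    rcases le_or_gt 0 x with h | h
    · simp [abs_of_nonneg h, h, not_lt.mpr h]
    · simp [abs_of_neg h, h, not_le.mpr h]
  have hneg : -(-s ∩ Iio 0) = s ∩ Ioi 0 := by ext y; simp
  rw [hsplit, measure_union (disjoint_left.mpr fun x h₁ h₂ => not_lt.mpr (mem_Ici.1 h₁.2) h₂.2)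
    (hs.neg.inter measurableSet_Iio), ← Measure.measure_neg volume (-s ∩ Iio 0), hneg]
  exact congrArg _ (measure_congr ((Filter.EventuallyEq.refl _ _).inter Ioi_ae_eq_Ici))

theorem map_volume_pi_abs {ι : Type*} [Fintype ι] :
    (volume : Measure (ι → ℝ)).map (fun a i => |a i|) =
      (2 : ℝ≥0) ^ Fintype.card ι • volume.restrict (Ici 0) := by
  have : SigmaFinite ((volume : Measure ℝ).map abs) := by
    rw [Real.map_volume_abs]; infer_instance
  rw [volume_pi, Measure.pi_map_pi fun _ => measurable_abs.aemeasurable, Real.map_volume_abs]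
  refine Measure.pi_eq fun s hs => ?_
  rw [← pi_univ_Ici, Measure.restrict_pi_pi, Measure.smul_apply, Measure.pi_pi]
  simp [Finset.prod_mul_distrib, ENNReal.smul_def]

theorem volume_nonneg_sum_rpow_le {ι : Type*} [Fintype ι] [Nonempty ι] {p : ℝ} (hp : 1 ≤ p)
    {t : ℝ} (ht : 0 ≤ t) :
    volume {y : ι → ℝ | (∀ i, 0 ≤ y i) ∧ ∑ i, y i ^ p ≤ t} =
      .ofReal (t ^ (Fintype.card ι / p) * Gamma (1 / p + 1) ^ Fintype.card ι /
        Gamma (Fintype.card ι / p + 1)) := by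
  have hp0 : 0 < p := by linarith
  set A := {y : ι → ℝ | (∀ i, 0 ≤ y i) ∧ ∑ i, y i ^ p ≤ t}
  have hA : MeasurableSet A := by measurability
  have hpreimage : (fun a i => |a i|) ⁻¹' A =
      {x : ι → ℝ | (∑ i, |x i| ^ p) ^ (1 / p) ≤ t ^ (1 / p)} := by
    ext x
    have : 0 ≤ ∑ i, |x i| ^ p := by positivity
    simp only [A, mem_preimage, mem_ofPred_eq, abs_nonneg, implies_true, true_and]
    rw [rpow_le_rpow_iff this ht (one_div_pos.mpr hp0)]
  have hball : (2 : ℝ≥0∞) ^ Fintype.card ι * volume A =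
      volume {x : ι → ℝ | (∑ i, |x i| ^ p) ^ (1 / p) ≤ t ^ (1 / p)} := by
    rw [← hpreimage, ← Measure.map_apply (by fun_prop) hA, map_volume_pi_abs, Measure.smul_apply,
      Measure.restrict_apply hA, inter_eq_left.2 fun y hy => hy.1]
    simp [ENNReal.smul_def]
  refine (ENNReal.mul_right_inj (a := 2 ^ Fintype.card ι) (by positivity) (by simp)).1 ?_
  rw [hball, volume_sum_rpow_le ι hp, ← ENNReal.ofReal_pow (by positivity),
    ← ENNReal.ofReal_mul (by positivity), ← ENNReal.ofReal_ofNat, ← ENNReal.ofReal_pow zero_le_two,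
    ← ENNReal.ofReal_mul (by positivity)]
  congr 1
  rw [← rpow_natCast, ← rpow_mul ht, mul_pow]
  ring_nf

/-- Marginal density of the first coordinate of the uniform distribution on the positive part
`Mₙ⁺ = {x ∈ ℝⁿ : xₖ ≥ 0, x₁ᵖ + ⋯ + xₙᵖ ≤ nRᵖ}` of the `ℓᵖ` ball (`p ≥ 1` real): for
`0 ≤ x ≤ n^(1/p) R`, the ratio of the `(n-1)`-volume of the slice at `x₁ = x` to the
`n`-volume of `Mₙ⁺` equals
`[p Γ(1+n/p) / (Γ(1/p) Γ(1+(n-1)/p))] · (nRᵖ - xᵖ)^((n-1)/p) / (nRᵖ)^(n/p)`. -/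
theorem stmt_5 (p : ℝ) (hp : 1 ≤ p) (R : ℝ) (hR : 0 < R)
    (n : ℕ) (hn : 2 ≤ n) (x : ℝ) (hx0 : 0 ≤ x) (hx : x ≤ (n : ℝ) ^ (1 / p) * R) :
    (volume {y : Fin (n - 1) → ℝ |
          (∀ i, 0 ≤ y i) ∧ ∑ i, (y i) ^ p ≤ (n : ℝ) * R ^ p - x ^ p}).toReal /
        (volume {z : Fin n → ℝ |
          (∀ i, 0 ≤ z i) ∧ ∑ i, (z i) ^ p ≤ (n : ℝ) * R ^ p}).toReal =
      (p * Gamma (1 + (n : ℝ) / p) / (Gamma (1 / p) * Gamma (1 + ((n : ℝ) - 1) / p))) *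
        (((n : ℝ) * R ^ p - x ^ p) ^ (((n : ℝ) - 1) / p) /
          ((n : ℝ) * R ^ p) ^ ((n : ℝ) / p)) := by
  obtain ⟨m, rfl⟩ : ∃ m, n = m + 1 := ⟨n - 1, by omega⟩
  have : Nonempty (Fin (m + 1 - 1)) := ⟨⟨0, by omega⟩⟩
  have hp0 : 0 < p := by linarith
  have hT : 0 < ((m + 1 : ℕ) : ℝ) * R ^ p := by positivity
  have hxp : x ^ p ≤ ((m + 1 : ℕ) : ℝ) * R ^ p := calc
    x ^ p ≤ (((m + 1 : ℕ) : ℝ) ^ (1 / p) * R) ^ p := rpow_le_rpow hx0 hx hp0.le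
    _ = ((m + 1 : ℕ) : ℝ) * R ^ p := by
      rw [mul_rpow (by positivity) hR.le, ← rpow_mul (by positivity), one_div_mul_cancel hp0.ne',
        rpow_one]
  rw [volume_nonneg_sum_rpow_le hp (sub_nonneg.2 hxp), volume_nonneg_sum_rpow_le hp hT.le,
    ENNReal.toReal_ofReal (by positivity), ENNReal.toReal_ofReal (by positivity)]
  simp only [Fintype.card_fin, Nat.add_sub_cancel, Nat.cast_add, Nat.cast_one,
    add_sub_cancel_right]
  have hΓ : Gamma (1 / p + 1) = Gamma (1 / p) / p := by
    rw [Gamma_add_one (by positivity)]; field_simp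
  have hΓ₁ : 0 < Gamma (1 / p) := Gamma_pos_of_pos (by positivity)
  have hΓₘ : 0 < Gamma (m / p + 1) := Gamma_pos_of_pos (by positivity)
  have hTpow : 0 < ((m + 1) * R ^ p) ^ ((m + 1) / p) := by positivity
  rw [hΓ, pow_succ, add_comm 1, add_comm 1]
  field_simp
end
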